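/- (Eigenfunction shift between forward and backward operators.) Let $\omega_n(p) = \prod_{k=1}^n p^k \cdot \big(1 - \sum_{l=1}^n p^l\big)$. If $\phi \in C^2(\overline\Delta_n)$ satisfies $L_n \phi = -\lambda \phi$ on $\Delta_n$, then $\omega_n \phi$ vanishes on $\partial\Delta_n$ and satisfies $L_n^*(\omega_n \phi) = -\lambda\, \omega_n \phi$ on $\Delta_n$; conversely, if $L_n^*(\omega_n\phi) = -\lambda\,\omega_n\phi$ on $\Delta_n$ for $\phi \in C^2(\overline\Delta_n)$, then $L_n\phi = -\lambda\phi$ on $\Delta_n$. -/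

import Mathlib

open scoped BigOperators

noncomputable section

/-- The open standard orthogonal simplex in ℝⁿ. -/
def stdSimplexO (n : ℕ) : Set (Fin n → ℝ) :=
  {p | (∀ i, 0 < p i) ∧ ∑ i, p i < 1}

/-- The closed standard orthogonal simplex in ℝⁿ. -/
def stdSimplexC (n : ℕ) : Set (Fin n → ℝ) :=
  {p | (∀ i, 0 ≤ p i) ∧ ∑ i, p i ≤ 1}

/-- First partial derivative in coordinate direction `i`. -/
def pd {n : ℕ} (u : (Fin n → ℝ) → ℝ) (i : Fin n) (p : Fin n → ℝ) : ℝ :=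
  fderiv ℝ u p (Pi.single i 1)

/-- Second partial derivative `∂_j ∂_i`. -/
def pd2 {n : ℕ} (u : (Fin n → ℝ) → ℝ) (i j : Fin n) (p : Fin n → ℝ) : ℝ :=
  pd (pd u i) j p

/-- Kronecker delta. -/
def kdelta {n : ℕ} (i j : Fin n) : ℝ := if i = j then 1 else 0

/-- Kolmogorov backward (Wright–Fisher) operator `L_n^*`. -/
def Lb {n : ℕ} (u : (Fin n → ℝ) → ℝ) (p : Fin n → ℝ) : ℝ :=
  (1/2) * ∑ i, ∑ j, p i * (kdelta i j - p j) * pd2 u i j p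

/-- Kolmogorov forward (Wright–Fisher) operator `L_n`. -/
def Lf {n : ℕ} (u : (Fin n → ℝ) → ℝ) (p : Fin n → ℝ) : ℝ :=
  (1/2) * ∑ i, ∑ j, pd2 (fun q => q i * (kdelta i j - q j) * u q) i j p

/-- The weight function `ω_n(p) = ∏ p^k ⋅ (1 - ∑ p^l)`. -/
def omegaWF (n : ℕ) (p : Fin n → ℝ) : ℝ := (∏ k, p k) * (1 - ∑ l, p l)

/-!
Write `a i j q = q i * (δ i j - q j)`. Expanding both `L_n^*(ω φ)` and `ω L_n φ` by the Leibniz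
rule, the second-order terms in `φ` agree, and, `a` being symmetric, the first-order ones agree as
soon as `ω` satisfies the balance condition `∑ i, a i j ∂_i ω = ω ∑ i, ∂_i a i j` for every `j`.
Differentiating that condition once more in direction `j` and summing makes the zeroth-order terms
agree too, so `L_n^*(ω φ) = ω L_n φ`. For the Wright–Fisher weight both sides of the balance
condition equal `ω (1 - (n + 1) p_j)`, because `p_i ∂_i ω = ω - p_i ∏ p_k`. Since `ω` vanishes on
the boundary of the simplex and is positive inside, both implications follow.
-/

open Filter Topology

variable {n : ℕ}

section PartialDerivatives

variable {u v : (Fin n → ℝ) → ℝ} {p : Fin n → ℝ}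

lemma pd_const (c : ℝ) (i : Fin n) : pd (fun _ => c) i p = 0 := by
  simp [pd]

lemma pd_apply (j i : Fin n) : pd (fun q => q j) i p = kdelta i j := by
  simp [pd, (hasFDerivAt_apply j p).fderiv, kdelta, Pi.single_apply, eq_comm]

lemma pd_prod_univ (i : Fin n) :
    pd (fun q => ∏ k, q k) i p = ∏ k ∈ Finset.univ.erase i, p k := by
  simp [pd, (hasFDerivAt_finsetProd (u := Finset.univ) (x := p)).fderiv, Pi.single_apply]

lemma pd_add (hu : DifferentiableAt ℝ u p) (hv : DifferentiableAt ℝ v p) (i : Fin n) :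
    pd (fun q => u q + v q) i p = pd u i p + pd v i p := by
  simp [pd, fderiv_fun_add hu hv]

lemma pd_sub (hu : DifferentiableAt ℝ u p) (hv : DifferentiableAt ℝ v p) (i : Fin n) :
    pd (fun q => u q - v q) i p = pd u i p - pd v i p := by
  simp [pd, fderiv_fun_sub hu hv]

lemma pd_mul (hu : DifferentiableAt ℝ u p) (hv : DifferentiableAt ℝ v p) (i : Fin n) :
    pd (fun q => u q * v q) i p = pd u i p * v p + u p * pd v i p := by
  simp [pd, fderiv_fun_mul hu hv]
  ring

lemma pd_sum {ι : Type*} (s : Finset ι) {w : ι → (Fin n → ℝ) → ℝ}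
    (hw : ∀ k ∈ s, DifferentiableAt ℝ (w k) p) (i : Fin n) :
    pd (fun q => ∑ k ∈ s, w k q) i p = ∑ k ∈ s, pd (w k) i p := by
  simp [pd, fderiv_fun_sum hw]

lemma ContDiffAt.differentiableAt_pd (hu : ContDiffAt ℝ 2 u p) (i : Fin n) :
    DifferentiableAt ℝ (pd u i) p :=
  ((hu.fderiv_right (m := 1) le_rfl).differentiableAt one_ne_zero).clm_apply
    (differentiableAt_const _)

lemma ContDiff.differentiable_pd (hu : ContDiff ℝ 2 u) (i : Fin n) :
    Differentiable ℝ (pd u i) :=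
  fun _ => hu.contDiffAt.differentiableAt_pd i

lemma pd2_mul (hu : ContDiffAt ℝ 2 u p) (hv : ContDiffAt ℝ 2 v p) (i j : Fin n) :
    pd2 (fun q => u q * v q) i j p =
      pd2 u i j p * v p + pd u i p * pd v j p + pd u j p * pd v i p + u p * pd2 v i j p := by
  have hloc : pd (fun q => u q * v q) i =ᶠ[𝓝 p] fun q => pd u i q * v q + u q * pd v i q := by
    filter_upwards [hu.eventually (by simp), hv.eventually (by simp)] with q huq hvq
    exact pd_mul (huq.differentiableAt two_ne_zero) (hvq.differentiableAt two_ne_zero) i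
  have hu1 := hu.differentiableAt two_ne_zero
  have hv1 := hv.differentiableAt two_ne_zero
  rw [pd2, pd, hloc.fderiv_eq, ← pd,
    pd_add ((hu.differentiableAt_pd i).fun_mul hv1) (hu1.fun_mul (hv.differentiableAt_pd i)),
    pd_mul (hu.differentiableAt_pd i) hv1, pd_mul hu1 (hv.differentiableAt_pd i), pd2, pd2]
  ring

end PartialDerivatives

section DiffusionOperators

def backwardOp (a : Fin n → Fin n → (Fin n → ℝ) → ℝ) (u : (Fin n → ℝ) → ℝ)
    (p : Fin n → ℝ) : ℝ :=
  ∑ i, ∑ j, a i j p * pd2 u i j p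

def forwardOp (a : Fin n → Fin n → (Fin n → ℝ) → ℝ) (u : (Fin n → ℝ) → ℝ)
    (p : Fin n → ℝ) : ℝ :=
  ∑ i, ∑ j, pd2 (fun q => a i j q * u q) i j p

variable {a : Fin n → Fin n → (Fin n → ℝ) → ℝ} {ω : (Fin n → ℝ) → ℝ}

lemma backwardOp_eq_mul_sum_pd2 (hsymm : ∀ i j, a i j = a j i)
    (ha : ∀ i j, ContDiff ℝ 2 (a i j)) (hω : ContDiff ℝ 2 ω)
    (hbal : ∀ j q, ∑ i, a i j q * pd ω i q = ω q * ∑ i, pd (a i j) i q) (p : Fin n → ℝ) :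
    backwardOp a ω p = ω p * ∑ i, ∑ j, pd2 (a i j) i j p := by
  have hbal_deriv : ∀ j, ∑ i, (pd (a i j) j p * pd ω i p + a i j p * pd2 ω i j p)
      = pd ω j p * ∑ i, pd (a i j) i p + ω p * ∑ i, pd2 (a i j) i j p := by
    intro j
    have hda : ∀ i, Differentiable ℝ (a i j) := fun i => (ha i j).differentiable two_ne_zero
    have h := congrArg (pd · j p) (funext (hbal j))
    rw [pd_sum _ fun i _ => (hda i p).fun_mul (hω.differentiable_pd i p),
      pd_mul (hω.differentiable two_ne_zero p)
        (Differentiable.fun_sum (fun i _ => (ha i j).differentiable_pd i) p),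
      pd_sum _ fun i _ => (ha i j).differentiable_pd i p] at h
    exact (Finset.sum_congr rfl fun i _ =>
      (pd_mul (hda i p) (hω.differentiable_pd i p) j).symm).trans h
  have hcross : ∑ j, ∑ i, pd (a i j) j p * pd ω i p
      = ∑ j, pd ω j p * ∑ i, pd (a i j) i p := by
    rw [Finset.sum_comm]
    refine Finset.sum_congr rfl fun i _ => ?_
    rw [Finset.mul_sum]
    exact Finset.sum_congr rfl fun j _ => by rw [hsymm]; ring
  have h := Finset.sum_congr rfl fun j (_ : j ∈ Finset.univ) => hbal_deriv j
  simp only [Finset.sum_add_distrib, hcross, ← Finset.mul_sum] at h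
  rw [backwardOp, Finset.sum_comm, Finset.sum_comm (f := fun i j => pd2 (a i j) i j p)]
  linarith

theorem backwardOp_mul_eq_mul_forwardOp (hsymm : ∀ i j, a i j = a j i)
    (ha : ∀ i j, ContDiff ℝ 2 (a i j)) (hω : ContDiff ℝ 2 ω)
    (hbal : ∀ j q, ∑ i, a i j q * pd ω i q = ω q * ∑ i, pd (a i j) i q)
    {φ : (Fin n → ℝ) → ℝ} {p : Fin n → ℝ} (hφ : ContDiffAt ℝ 2 φ p) :
    backwardOp a (fun q => ω q * φ q) p = ω p * forwardOp a φ p := by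
  have hbal_row : ∀ i, ∑ j, a i j p * pd ω j p = ω p * ∑ j, pd (a i j) j p := fun i => by
    simpa only [hsymm i] using hbal i p
  simp only [backwardOp, forwardOp, pd2_mul hω.contDiffAt hφ, pd2_mul (ha _ _).contDiffAt hφ,
    mul_add, Finset.sum_add_distrib]
  congr 1
  congr 1
  congr 1
  · have h := backwardOp_eq_mul_sum_pd2 hsymm ha hω hbal p
    rw [backwardOp] at h
    simp only [← mul_assoc, ← Finset.sum_mul, h]
  · rw [Finset.sum_comm, Finset.sum_comm (f := fun i j => pd (a i j) i p * pd φ j p)]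
    simp only [← mul_assoc, ← Finset.sum_mul, hbal _ p, Finset.mul_sum]
  · simp only [← mul_assoc, ← Finset.sum_mul, hbal_row, Finset.mul_sum]
  · simp only [Finset.mul_sum]
    exact Finset.sum_congr rfl fun i _ => Finset.sum_congr rfl fun j _ => mul_left_comm _ _ _

end DiffusionOperators

section WrightFisher

def wfCoeff (i j : Fin n) (q : Fin n → ℝ) : ℝ := q i * (kdelta i j - q j)

@[simp] lemma kdelta_self (i : Fin n) : kdelta i i = 1 := if_pos rfl

lemma wfCoeff_comm (i j : Fin n) : wfCoeff i j = wfCoeff j i := by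
  funext q
  by_cases h : i = j
  · rw [h]
  · simp only [wfCoeff, kdelta, if_neg h, if_neg (Ne.symm h)]
    ring

lemma contDiff_wfCoeff (i j : Fin n) : ContDiff ℝ 2 (wfCoeff i j) := by
  unfold wfCoeff
  fun_prop

lemma contDiff_omegaWF : ContDiff ℝ 2 (omegaWF n) := by
  unfold omegaWF
  fun_prop

lemma pd_wfCoeff_self (i j : Fin n) (q : Fin n → ℝ) :
    pd (wfCoeff i j) i q = kdelta i j - q j - q i * kdelta i j := by
  have hsub : DifferentiableAt ℝ (fun q : Fin n → ℝ => kdelta i j - q j) q := by fun_prop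
  unfold wfCoeff
  rw [pd_mul (by fun_prop) hsub, pd_sub (by fun_prop) (by fun_prop), pd_const,
    pd_apply, pd_apply, kdelta_self]
  ring

lemma sum_pd_wfCoeff_self (j : Fin n) (q : Fin n → ℝ) :
    ∑ i, pd (wfCoeff i j) i q = 1 - (n + 1) * q j := by
  simp only [pd_wfCoeff_self, kdelta, mul_ite, mul_one, mul_zero, Finset.sum_sub_distrib,
    Finset.sum_ite_eq', Finset.mem_univ, if_true, Finset.sum_const, Finset.card_univ,
    Fintype.card_fin, nsmul_eq_mul]
  ring

lemma coord_mul_pd_omegaWF (i : Fin n) (q : Fin n → ℝ) :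
    q i * pd (omegaWF n) i q = omegaWF n q - q i * ∏ k, q k := by
  have hsub : DifferentiableAt ℝ (fun q : Fin n → ℝ => 1 - ∑ l, q l) q := by fun_prop
  unfold omegaWF
  rw [pd_mul (by fun_prop) hsub, pd_sub (by fun_prop) (by fun_prop), pd_const,
    pd_sum _ (by fun_prop), pd_prod_univ]
  simp only [pd_apply, kdelta, Finset.sum_ite_eq, Finset.mem_univ, if_true]
  linear_combination (1 - ∑ l, q l) * Finset.mul_prod_erase Finset.univ q (Finset.mem_univ i)

lemma sum_wfCoeff_mul_pd_omegaWF (j : Fin n) (q : Fin n → ℝ) :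
    ∑ i, wfCoeff i j q * pd (omegaWF n) i q = omegaWF n q * (1 - (n + 1) * q j) := by
  have h : ∀ i, wfCoeff i j q * pd (omegaWF n) i q
      = (kdelta i j - q j) * (omegaWF n q - q i * ∏ k, q k) := fun i => by
    rw [← coord_mul_pd_omegaWF, wfCoeff]
    ring
  simp only [h, sub_mul, Finset.sum_sub_distrib, kdelta, ite_mul, one_mul, zero_mul,
    Finset.sum_ite_eq', Finset.mem_univ, if_true, ← Finset.mul_sum, ← Finset.sum_mul,
    omegaWF, Finset.sum_const, Finset.card_univ, Fintype.card_fin, nsmul_eq_mul]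
  ring

theorem Lb_omegaWF_mul {φ : (Fin n → ℝ) → ℝ} {p : Fin n → ℝ} (hφ : ContDiffAt ℝ 2 φ p) :
    Lb (fun q => omegaWF n q * φ q) p = omegaWF n p * Lf φ p := by
  have h := backwardOp_mul_eq_mul_forwardOp wfCoeff_comm contDiff_wfCoeff contDiff_omegaWF
    (fun j q => by rw [sum_wfCoeff_mul_pd_omegaWF, sum_pd_wfCoeff_self]) hφ
  change 1 / 2 * backwardOp wfCoeff _ p = omegaWF n p * (1 / 2 * forwardOp wfCoeff φ p)
  rw [h]
  ring

end WrightFisher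

section SimplexTopology

lemma isOpen_stdSimplexO : IsOpen (stdSimplexO n) := by
  rw [stdSimplexO, Set.ofPred_and, Set.ofPred_forall]
  exact (isOpen_iInter_of_finite fun i => isOpen_lt continuous_const (continuous_apply i)).inter
    (isOpen_lt (by fun_prop) continuous_const)

lemma isClosed_stdSimplexC : IsClosed (stdSimplexC n) := by
  rw [stdSimplexC, Set.ofPred_and, Set.ofPred_forall]
  exact (isClosed_iInter fun i => isClosed_le continuous_const (continuous_apply i)).inter
    (isClosed_le (by fun_prop) continuous_const)

lemma stdSimplexO_subset_stdSimplexC : stdSimplexO n ⊆ stdSimplexC n :=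
  fun _ hp => ⟨fun i => (hp.1 i).le, hp.2.le⟩

lemma frontier_stdSimplexC_subset : frontier (stdSimplexC n) ⊆ stdSimplexC n \ stdSimplexO n := by
  rw [isClosed_stdSimplexC.frontier_eq]
  exact Set.sdiff_subset_sdiff_right
    (interior_maximal stdSimplexO_subset_stdSimplexC isOpen_stdSimplexO)

lemma omegaWF_pos {p : Fin n → ℝ} (hp : p ∈ stdSimplexO n) : 0 < omegaWF n p :=
  mul_pos (Finset.prod_pos fun i _ => hp.1 i) (sub_pos.mpr hp.2)

lemma omegaWF_eq_zero_of_mem_frontier {p : Fin n → ℝ} (hp : p ∈ frontier (stdSimplexC n)) :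
    omegaWF n p = 0 := by
  obtain ⟨hC, hO⟩ := frontier_stdSimplexC_subset hp
  by_contra h
  obtain ⟨hprod, hsum⟩ := mul_ne_zero_iff.mp h
  refine hO ⟨fun i => (hC.1 i).lt_of_ne ?_, hC.2.lt_of_ne fun h1 => hsum ?_⟩
  · exact (Finset.prod_ne_zero_iff.mp hprod i (Finset.mem_univ i)).symm
  · rw [h1, sub_self]

end SimplexTopology

/-- Eigenfunction shift between the forward and backward operators. -/
theorem stmt12 (n : ℕ) (lam : ℝ) (φ : (Fin n → ℝ) → ℝ)
    (hφ : ContDiffOn ℝ 2 φ (stdSimplexC n)) :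
    ((∀ p ∈ stdSimplexO n, Lf φ p = -lam * φ p) →
      (∀ p ∈ frontier (stdSimplexC n), omegaWF n p * φ p = 0) ∧
      (∀ p ∈ stdSimplexO n,
        Lb (fun q => omegaWF n q * φ q) p = -lam * (omegaWF n p * φ p))) ∧
    ((∀ p ∈ stdSimplexO n,
        Lb (fun q => omegaWF n q * φ q) p = -lam * (omegaWF n p * φ p)) →
      ∀ p ∈ stdSimplexO n, Lf φ p = -lam * φ p) := by
  have hφ_at : ∀ p ∈ stdSimplexO n, ContDiffAt ℝ 2 φ p := fun p hp =>
    hφ.contDiffAt (Filter.mem_of_superset (isOpen_stdSimplexO.mem_nhds hp)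
      stdSimplexO_subset_stdSimplexC)
  refine ⟨fun hf => ⟨fun p hp => ?_, fun p hp => ?_⟩, fun hb p hp => ?_⟩
  · rw [omegaWF_eq_zero_of_mem_frontier hp, zero_mul]
  · rw [Lb_omegaWF_mul (hφ_at p hp), hf p hp]
    ring
  · have h := hb p hp
    rw [Lb_omegaWF_mul (hφ_at p hp)] at h
    exact mul_left_cancel₀ (omegaWF_pos hp).ne' (h.trans (by ring))
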